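/- (Perrin's second diameter lower bound.) Let (Γ,B) be a finite simple connected graph with boundary, with |B| ≥ 2, and let d_B = max{ d_Γ(v,w) : v,w∈B } be the extrinsic diameter of the boundary, where d_Γ is the graph distance in Γ. Then σ₁(Γ,B) ≥ |B| / ( ⌊|B|/2⌋ · ⌈|B|/2⌉ · d_B ). -/
import Mathlib


/-! Discrete Steklov eigenvalues of graphs with boundary. -/

namespace DiscreteSteklov

variable {V : Type*}

/-- The squared difference of a function `u` across an unordered edge. -/
noncomputable def edgeEnergy (u : V → ℝ) : Sym2 V → ℝ :=
  Sym2.lift ⟨fun i j => (u i - u j) ^ 2, by intro i j; ring⟩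

/-- The Dirichlet energy of `u` with respect to the edge set `E'`. -/
noncomputable def energy (E' : Set (Sym2 V)) (u : V → ℝ) : ℝ :=
  ∑ᶠ e ∈ E', edgeEnergy u e

/-- The squared `L²` norm of `u` on the boundary `B`. -/
noncomputable def boundaryNorm (B : Set V) (u : V → ℝ) : ℝ :=
  ∑ᶠ i ∈ B, u i ^ 2

/-- The space of real-valued functions on `S`, realised as the subspace of
functions on `V` vanishing outside of `S`. -/
def funcsOn (S : Set V) : Submodule ℝ (V → ℝ) where
  carrier := {u | ∀ v ∉ S, u v = 0}
  add_mem' := by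
    intro a b ha hb v hv
    simp [ha v hv, hb v hv]
  zero_mem' := fun v _ => rfl
  smul_mem' := by
    intro c a ha v hv
    simp [ha v hv]

/-- Restriction of functions to the boundary `B`, as a linear map. -/
def restrictTo (B : Set V) : (V → ℝ) →ₗ[ℝ] (↥B → ℝ) :=
  LinearMap.funLeft ℝ ℝ (Subtype.val : ↥B → V)

/-- The `k`-th min-max Steklov eigenvalue of the graph with boundary having
vertex set `Ωbar`, edge set `E'` and boundary `B`: the minimum over all
`(k+1)`-dimensional subspaces `F` of functions on `Ωbar` whose space of
restrictions to `B` is also `(k+1)`-dimensional, of the maximum of the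
Rayleigh quotient over members of `F` whose restriction to `B` is not
identically `0`. -/
noncomputable def steklov (E' : Set (Sym2 V)) (Ωbar B : Set V) (k : ℕ) : ℝ :=
  sInf { t : ℝ | ∃ F : Submodule ℝ (V → ℝ), F ≤ funcsOn Ωbar ∧
    Module.finrank ℝ ↥F = k + 1 ∧
    Module.finrank ℝ ↥(F.map (restrictTo B)) = k + 1 ∧
    t = sSup { r : ℝ | ∃ u ∈ F, restrictTo B u ≠ 0 ∧
      r = energy E' u / boundaryNorm B u } }

/-- The vertex boundary `δΩ` of a set `Ω` of vertices of `G`. -/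
def vertexBoundary (G : SimpleGraph V) (Ω : Set V) : Set V :=
  {i | i ∉ Ω ∧ ∃ j ∈ Ω, G.Adj j i}

/-- The set of edges of `G` with at least one endpoint in `Ω`. -/
def incidentEdges (G : SimpleGraph V) (Ω : Set V) : Set (Sym2 V) :=
  {e | e ∈ G.edgeSet ∧ ∃ v ∈ Ω, v ∈ e}

end DiscreteSteklov

open DiscreteSteklov


private lemma frac_ineq {ι : Type*} (s : Finset ι) (t : ι → ℝ)
    (h : ∀ i ∈ s, 0 ≤ t i ∧ t i ≤ 1) (k : ℕ) :
    ((∑ i ∈ s, t i) - k) * ((k : ℝ) + 1 - ∑ i ∈ s, t i) ≤ ∑ i ∈ s, t i * (1 - t i) := by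
  classical
  induction s using Finset.cons_induction generalizing k with
  | empty =>
      simp only [Finset.sum_empty]
      nlinarith [Nat.cast_nonneg (α := ℝ) k]
  | cons a s ha ih =>
      have hts : ∀ i ∈ s, 0 ≤ t i ∧ t i ≤ 1 := fun i hi => h i (Finset.mem_cons_of_mem hi)
      have hta := h a (Finset.mem_cons_self a s)
      have hTnn : (0:ℝ) ≤ ∑ i ∈ s, t i := Finset.sum_nonneg fun i hi => (hts i hi).1
      have hPnn : (0:ℝ) ≤ ∑ i ∈ s, t i * (1 - t i) :=
        Finset.sum_nonneg fun i hi => mul_nonneg (hts i hi).1 (by linarith [(hts i hi).2])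
      rw [Finset.sum_cons, Finset.sum_cons]
      set T := ∑ i ∈ s, t i with hT
      by_cases hc : (k:ℝ) ≤ T
      · have := ih hts k
        nlinarith [mul_nonneg hta.1 (sub_nonneg.mpr hc)]
      · push_neg at hc
        have hk1 : 1 ≤ k := by
          by_contra hk
          interval_cases k
          · simp at hc; linarith
        have := ih hts (k - 1)
        have hcast : ((k - 1 : ℕ) : ℝ) = (k : ℝ) - 1 := by
          push_cast [hk1]; ring
        rw [hcast] at this
        nlinarith [mul_nonneg (sub_nonneg.mpr hc.le) (sub_nonneg.mpr hta.2)]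
private lemma box_lemma {ι : Type*} (s : Finset ι) (t : ι → ℝ)
    (h : ∀ i ∈ s, 0 ≤ t i ∧ t i ≤ 1) :
    (s.card : ℝ) * ∑ i ∈ s, t i ^ 2 - (∑ i ∈ s, t i) ^ 2 ≤
      ((s.card / 2 : ℕ) : ℝ) * (((s.card + 1) / 2 : ℕ) : ℝ) := by
  set b := s.card with hb
  set p := b / 2 with hp
  set q := (b + 1) / 2 with hq
  have hpq : p + q = b := by omega
  have hpqR : (p : ℝ) + (q : ℝ) = (b : ℝ) := by exact_mod_cast congrArg (Nat.cast (R := ℝ)) hpq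
  have hPnn : (0:ℝ) ≤ ∑ i ∈ s, t i * (1 - t i) :=
    Finset.sum_nonneg fun i hi => mul_nonneg (h i hi).1 (by linarith [(h i hi).2])
  set S := ∑ i ∈ s, t i with hS
  set P := ∑ i ∈ s, t i * (1 - t i) with hP
  have hQ : ∑ i ∈ s, t i ^ 2 = S - P := by
    rw [hS, hP, ← Finset.sum_sub_distrib]
    apply Finset.sum_congr rfl; intro i _; ring
  rw [hQ]
  have hcase : q = p ∨ q = p + 1 := by omega
  rcases hcase with hc | hc
  · have hbR : (b : ℝ) = 2 * (p : ℝ) := by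
      rw [← hpqR]; rw [hc]; ring
    rw [hbR, hc]
    nlinarith [sq_nonneg (S - (p:ℝ)), mul_nonneg (Nat.cast_nonneg (α := ℝ) p) hPnn]
  · have hqR : (q : ℝ) = (p : ℝ) + 1 := by exact_mod_cast congrArg (Nat.cast (R := ℝ)) hc
    have hbR : (b : ℝ) = 2 * (p : ℝ) + 1 := by rw [← hpqR, hqR]; ring
    have key := frac_ineq s t h p
    rw [← hS, ← hP] at key
    rw [hbR, hqR]
    nlinarith [key, mul_nonneg (Nat.cast_nonneg (α := ℝ) p) hPnn]
private lemma sum_sq_le {ι : Type*} (s : Finset ι) (u : ι → ℝ) (M m : ℝ)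
    (hsum : ∑ i ∈ s, u i = 0) (hub : ∀ i ∈ s, u i ≤ M) (hlb : ∀ i ∈ s, m ≤ u i) :
    (s.card : ℝ) * ∑ i ∈ s, u i ^ 2 ≤
      ((s.card / 2 : ℕ) : ℝ) * (((s.card + 1) / 2 : ℕ) : ℝ) * (M - m) ^ 2 := by
  rcases Finset.eq_empty_or_nonempty s with hse | hse
  · subst hse; simp
  have hpqnn : (0:ℝ) ≤ ((s.card / 2 : ℕ) : ℝ) * (((s.card + 1) / 2 : ℕ) : ℝ) :=
    mul_nonneg (Nat.cast_nonneg _) (Nat.cast_nonneg _)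
  obtain ⟨i₀, hi₀⟩ := hse
  have hmM : m ≤ M := le_trans (hlb i₀ hi₀) (hub i₀ hi₀)
  rcases eq_or_lt_of_le hmM with he | hlt
  · -- M = m forces all u i equal hence 0
    have hall : ∀ i ∈ s, u i = m := fun i hi => le_antisymm (he ▸ hub i hi) (hlb i hi)
    have : ∀ i ∈ s, u i = 0 := by
      intro i hi
      have hm0 : (s.card : ℝ) * m = 0 := by
        rw [← hsum, Finset.sum_congr rfl hall, Finset.sum_const, nsmul_eq_mul]
      have hc0 : (s.card : ℝ) ≠ 0 := by
        simp [Finset.card_ne_zero_of_mem hi]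
      rw [hall i hi]
      exact (mul_eq_zero.mp hm0).resolve_left hc0
    rw [Finset.sum_congr rfl (fun i hi => by rw [this i hi, zero_pow two_ne_zero])]
    simp
    positivity
  · set c := M - m with hc
    have hcpos : 0 < c := by simp [hc]; linarith
    set t : ι → ℝ := fun i => (u i - m) / c with ht
    have hbox := box_lemma s t ?_
    · have h1 : ∑ i ∈ s, t i = (- (s.card : ℝ) * m) / c := by
        rw [ht]
        rw [← Finset.sum_div]
        congr 1
        rw [Finset.sum_sub_distrib, hsum, Finset.sum_const, nsmul_eq_mul]
        ring
      have h2 : ∑ i ∈ s, t i ^ 2 = ((∑ i ∈ s, u i ^ 2) + (s.card : ℝ) * m ^ 2) / c ^ 2 := by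
        simp only [ht, div_pow, ← Finset.sum_div]
        congr 1
        have : ∀ i ∈ s, (u i - m) ^ 2 = u i ^ 2 - 2 * m * u i + m ^ 2 := fun i _ => by ring
        rw [Finset.sum_congr rfl this, Finset.sum_add_distrib, Finset.sum_sub_distrib,
          ← Finset.mul_sum, hsum, Finset.sum_const, nsmul_eq_mul]
        ring
      rw [h1, h2] at hbox
      have hc2 : (0:ℝ) < c ^ 2 := by positivity
      rw [div_pow] at hbox
      have hkey : ((s.card : ℝ) * ∑ i ∈ s, u i ^ 2) / c ^ 2 ≤
          ((s.card / 2 : ℕ) : ℝ) * (((s.card + 1) / 2 : ℕ) : ℝ) := by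
        calc ((s.card : ℝ) * ∑ i ∈ s, u i ^ 2) / c ^ 2
            = (s.card : ℝ) * (((∑ i ∈ s, u i ^ 2) + (s.card : ℝ) * m ^ 2) / c ^ 2) -
              (- (s.card : ℝ) * m) ^ 2 / c ^ 2 := by field_simp; ring
          _ ≤ _ := hbox
      calc (s.card : ℝ) * ∑ i ∈ s, u i ^ 2
          = (((s.card : ℝ) * ∑ i ∈ s, u i ^ 2) / c ^ 2) * c ^ 2 := by field_simp
        _ ≤ ((s.card / 2 : ℕ) : ℝ) * (((s.card + 1) / 2 : ℕ) : ℝ) * c ^ 2 := by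
            apply mul_le_mul_of_nonneg_right hkey (le_of_lt hc2)
    · intro i hi
      constructor
      · apply div_nonneg _ hcpos.le
        linarith [hlb i hi]
      · rw [div_le_one hcpos]
        linarith [hub i hi]
private lemma edgeEnergy_nonneg {V : Type*} (u : V → ℝ) (e : Sym2 V) : 0 ≤ edgeEnergy u e := by
  induction e using Sym2.ind with
  | _ x y => simp [edgeEnergy]; positivity

private lemma walk_energy {V : Type*} {G : SimpleGraph V} (u : V → ℝ) {x y : V} (p : G.Walk x y) :
    (u x - u y) ^ 2 ≤ (p.length : ℝ) * (p.edges.map (edgeEnergy u)).sum := by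
  induction p with
  | nil => simp
  | @cons x z y h q ih =>
      rw [SimpleGraph.Walk.edges_cons, SimpleGraph.Walk.length_cons, List.map_cons, List.sum_cons]
      have hS : (0:ℝ) ≤ (q.edges.map (edgeEnergy u)).sum := by
        apply List.sum_nonneg
        intro r hr
        obtain ⟨e, _, rfl⟩ := List.mem_map.mp hr
        exact edgeEnergy_nonneg u e
      have hE : edgeEnergy u s(x, z) = (u x - u z) ^ 2 := by simp [edgeEnergy]
      rw [hE]
      push_cast
      set n : ℝ := (q.length : ℝ) with hn
      have hnn : (0:ℝ) ≤ n := by rw [hn]; positivity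
      set a := u x - u z
      set b := u z - u y
      have hxy : u x - u y = a + b := by ring
      rw [hxy]
      rcases eq_or_lt_of_le hnn with h0 | h0
      · have hb : b ^ 2 ≤ 0 := by rw [← h0] at ih; simpa using ih
        have hb0 : b = 0 := by nlinarith [sq_nonneg b]
        rw [hb0, ← h0]
        nlinarith [hS]
      · nlinarith [ih, hS, sq_nonneg (n * a - b), mul_pos h0 h0]

private lemma list_sum_le_finset_sum {α : Type*} [DecidableEq α] {l : List α} {s : Finset α}
    {f : α → ℝ} (hn : l.Nodup) (hsub : ∀ e ∈ l, e ∈ s) (hf : ∀ e ∈ s, 0 ≤ f e) :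
    (l.map f).sum ≤ ∑ e ∈ s, f e := by
  induction l generalizing s with
  | nil => exact Finset.sum_nonneg hf
  | cons a l ih =>
      rw [List.map_cons, List.sum_cons]
      have hnd := List.nodup_cons.mp hn
      have has : a ∈ s := hsub a (by simp)
      have h1 : (l.map f).sum ≤ ∑ e ∈ s.erase a, f e := by
        apply ih hnd.2
        · intro e he
          exact Finset.mem_erase.mpr ⟨fun h => hnd.1 (h ▸ he), hsub e (by simp [he])⟩
        · intro e he
          exact hf e (Finset.mem_of_mem_erase he)
      have h2 := Finset.add_sum_erase s f has
      linarith
private lemma edgeEnergy_le_aux {V : Type*} [Fintype V] (u : V → ℝ) (e : Sym2 V) :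
    edgeEnergy u e ≤ 4 * ‖u‖ ^ 2 := by
  induction e using Sym2.ind with
  | _ i j =>
    have hi := norm_le_pi_norm u i
    have hj := norm_le_pi_norm u j
    rw [Real.norm_eq_abs] at hi hj
    obtain ⟨hi1, hi2⟩ := abs_le.mp hi
    obtain ⟨hj1, hj2⟩ := abs_le.mp hj
    have : edgeEnergy u s(i, j) = (u i - u j) ^ 2 := by
      simp [edgeEnergy]
    rw [this]
    nlinarith [norm_nonneg u]



private lemma exists_opbound {E F' : Type*} [NormedAddCommGroup E] [NormedSpace ℝ E]
    [NormedAddCommGroup F'] [NormedSpace ℝ F'] [FiniteDimensional ℝ E] (f : E →ₗ[ℝ] F') :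
    ∃ C : ℝ, 0 ≤ C ∧ ∀ x, ‖f x‖ ≤ C * ‖x‖ := by
  refine ⟨‖LinearMap.toContinuousLinearMap f‖, norm_nonneg _, fun x => ?_⟩
  have h := (LinearMap.toContinuousLinearMap f).le_opNorm x
  rwa [LinearMap.coe_toContinuousLinearMap'] at h
private lemma bddAbove_R {V : Type*} [Fintype V] (G : SimpleGraph V) (B : Set V)
    (F : Submodule ℝ (V → ℝ))
    (hinj : Function.Injective ((restrictTo B).domRestrict F)) :
    BddAbove {r : ℝ | ∃ u ∈ F, restrictTo B u ≠ 0 ∧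
      r = energy G.edgeSet u / boundaryNorm B u} := by
  classical
  haveI : Fintype ↥B := Fintype.ofFinite _
  set ψ : ↥F →ₗ[ℝ] (↥B → ℝ) := (restrictTo B).domRestrict F with hψ
  obtain ⟨C, hCnn, hC⟩ := exists_opbound
    ((F.subtype.comp (LinearEquiv.ofInjective ψ hinj).symm.toLinearMap))
  have hub : ∀ w : ↥F, ‖(w : V → ℝ)‖ ≤ C * ‖ψ w‖ := by
    intro w
    have h2 := hC ⟨ψ w, LinearMap.mem_range_self ψ w⟩
    have hx : (⟨ψ w, LinearMap.mem_range_self ψ w⟩ : ↥(LinearMap.range ψ)) =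
        LinearEquiv.ofInjective ψ hinj w :=
      Subtype.ext (LinearEquiv.ofInjective_apply ψ w).symm
    rw [hx] at h2
    rw [LinearMap.comp_apply, LinearEquiv.coe_toLinearMap, LinearEquiv.symm_apply_apply] at h2
    have hnx : ‖(LinearEquiv.ofInjective ψ hinj w : ↥(LinearMap.range ψ))‖ = ‖ψ w‖ := by
      rw [Submodule.coe_norm, LinearEquiv.ofInjective_apply]
    rw [hnx] at h2
    exact h2
  set EF := (Set.toFinite G.edgeSet).toFinset with hEFdef
  refine ⟨(EF.card : ℝ) * (4 * C ^ 2), ?_⟩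
  rintro r ⟨u', hu'F, hu'ne, rfl⟩
  have hN : boundaryNorm B u' = ∑ i ∈ (Set.toFinite B).toFinset, u' i ^ 2 := by
    rw [boundaryNorm]
    exact finsum_mem_eq_finite_toFinset_sum _ (Set.toFinite B)
  have hNnn : 0 ≤ boundaryNorm B u' := by
    rw [hN]; exact Finset.sum_nonneg fun i _ => sq_nonneg _
  have hnormle : ‖restrictTo B u'‖ ^ 2 ≤ boundaryNorm B u' := by
    have h1 : ‖restrictTo B u'‖ ≤ Real.sqrt (boundaryNorm B u') := by
      rw [pi_norm_le_iff_of_nonneg (Real.sqrt_nonneg _)]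
      intro j
      rw [Real.norm_eq_abs]
      apply Real.abs_le_sqrt
      have hj : (j : V) ∈ (Set.toFinite B).toFinset := (Set.Finite.mem_toFinset _).mpr j.2
      rw [hN]
      exact Finset.single_le_sum (fun i _ => sq_nonneg (u' i)) hj
    calc ‖restrictTo B u'‖ ^ 2 ≤ Real.sqrt (boundaryNorm B u') ^ 2 :=
          pow_le_pow_left₀ (norm_nonneg _) h1 2
      _ = boundaryNorm B u' := Real.sq_sqrt hNnn
  have hrupos : 0 < ‖restrictTo B u'‖ ^ 2 := by
    have h0 := norm_pos_iff.mpr hu'ne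
    positivity
  have hNpos : 0 < boundaryNorm B u' := lt_of_lt_of_le hrupos hnormle
  have huC : ‖u'‖ ≤ C * ‖restrictTo B u'‖ := hub ⟨u', hu'F⟩
  have hE' : energy G.edgeSet u' = ∑ e ∈ EF, edgeEnergy u' e := by
    rw [energy, hEFdef]
    exact finsum_mem_eq_finite_toFinset_sum _ (Set.toFinite G.edgeSet)
  have hEle : energy G.edgeSet u' ≤ (EF.card : ℝ) * (4 * ‖u'‖ ^ 2) := by
    rw [hE']
    calc ∑ e ∈ EF, edgeEnergy u' e ≤ ∑ _e ∈ EF, 4 * ‖u'‖ ^ 2 :=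
          Finset.sum_le_sum fun e _ => edgeEnergy_le_aux u' e
      _ = (EF.card : ℝ) * (4 * ‖u'‖ ^ 2) := by rw [Finset.sum_const, nsmul_eq_mul]
  have hsq : ‖u'‖ ^ 2 ≤ (C * ‖restrictTo B u'‖) ^ 2 := pow_le_pow_left₀ (norm_nonneg _) huC 2
  rw [div_le_iff₀ hNpos]
  have step2 : (EF.card : ℝ) * (4 * ‖u'‖ ^ 2) ≤
      (EF.card : ℝ) * (4 * (C * ‖restrictTo B u'‖) ^ 2) := by
    apply mul_le_mul_of_nonneg_left _ (Nat.cast_nonneg _)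
    linarith
  have step3 : (EF.card : ℝ) * (4 * (C * ‖restrictTo B u'‖) ^ 2) =
      ((EF.card : ℝ) * (4 * C ^ 2)) * ‖restrictTo B u'‖ ^ 2 := by ring
  have step4 : ((EF.card : ℝ) * (4 * C ^ 2)) * ‖restrictTo B u'‖ ^ 2 ≤
      ((EF.card : ℝ) * (4 * C ^ 2)) * boundaryNorm B u' :=
    mul_le_mul_of_nonneg_left hnormle (by positivity)
  linarith
private lemma key_estimate {V : Type*} [Fintype V] (G : SimpleGraph V) (hG : G.Connected)
    (B : Set V) (hB : 2 ≤ B.ncard) (u : V → ℝ)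
    (hsum : ∑ i ∈ (Set.toFinite B).toFinset, u i = 0)
    (hne : ∃ i ∈ B, u i ≠ 0) :
    (B.ncard : ℝ) / (((B.ncard / 2 : ℕ) : ℝ) * (((B.ncard + 1) / 2 : ℕ) : ℝ) *
          ((sSup {n : ℕ | ∃ v ∈ B, ∃ w ∈ B, G.dist v w = n} : ℕ) : ℝ)) ≤
      energy G.edgeSet u / boundaryNorm B u := by
  classical
  set BF := (Set.toFinite B).toFinset with hBFdef
  have hBF : (BF : Set V) = B := Set.Finite.coe_toFinset _
  have hmemBF : ∀ i, i ∈ BF ↔ i ∈ B := fun i => Set.Finite.mem_toFinset _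
  have hcard : B.ncard = BF.card := Set.ncard_eq_toFinset_card B
  set b := B.ncard with hbdef
  set p := b / 2 with hpdef
  set q := (b + 1) / 2 with hqdef
  set Dset := {n : ℕ | ∃ v ∈ B, ∃ w ∈ B, G.dist v w = n} with hDset
  set D := sSup Dset with hDdef
  -- boundedness of Dset
  have hDfin : Dset.Finite := by
    apply Set.Finite.subset (Set.Finite.image (fun pr : V × V => G.dist pr.1 pr.2)
      ((Set.toFinite (B ×ˢ B))))
    rintro n ⟨v, hv, w, hw, rfl⟩
    exact ⟨(v, w), ⟨hv, hw⟩, rfl⟩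
  have hDbdd : BddAbove Dset := hDfin.bddAbove
  have hDle : ∀ v ∈ B, ∀ w ∈ B, G.dist v w ≤ D := fun v hv w hw =>
    le_csSup hDbdd ⟨v, hv, w, hw, rfl⟩
  have hD1 : 1 ≤ D := by
    obtain ⟨a, c, ha, hc, hac⟩ := (Set.one_lt_ncard_iff (Set.toFinite B)).mp (by omega)
    have := hG.pos_dist_of_ne hac
    calc 1 ≤ G.dist a c := this
    _ ≤ D := hDle a ha c hc
  -- boundary norm as finite sum
  have hN : boundaryNorm B u = ∑ i ∈ BF, u i ^ 2 := by
    rw [boundaryNorm, ← hBF, finsum_mem_coe_finset]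
  -- energy as finite sum
  set EF := (Set.toFinite G.edgeSet).toFinset with hEFdef
  have hE : energy G.edgeSet u = ∑ e ∈ EF, edgeEnergy u e := by
    rw [energy, ← Set.Finite.coe_toFinset (Set.toFinite G.edgeSet), finsum_mem_coe_finset]
  have hEnn : 0 ≤ energy G.edgeSet u := by
    rw [hE]; exact Finset.sum_nonneg fun e _ => edgeEnergy_nonneg u e
  -- N positive
  obtain ⟨i₁, hi₁B, hi₁⟩ := hne
  have hi₁BF : i₁ ∈ BF := (hmemBF i₁).mpr hi₁B
  have hNpos : 0 < boundaryNorm B u := by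
    rw [hN]
    have h1 : u i₁ ^ 2 ≤ ∑ i ∈ BF, u i ^ 2 :=
      Finset.single_le_sum (fun i _ => sq_nonneg (u i)) hi₁BF
    have h2 : 0 < u i₁ ^ 2 := by positivity
    linarith
  -- max and min
  have hBFne : BF.Nonempty := ⟨i₁, hi₁BF⟩
  obtain ⟨x, hx, hxmax⟩ := BF.exists_max_image u hBFne
  obtain ⟨y, hy, hymin⟩ := BF.exists_min_image u hBFne
  set M := u x with hM
  set m := u y with hm
  have hb2 : b = BF.card := hcard
  have hkey1 : (b : ℝ) * ∑ i ∈ BF, u i ^ 2 ≤ (p : ℝ) * (q : ℝ) * (M - m) ^ 2 := by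
    have := sum_sq_le BF u M m hsum (fun i hi => hxmax i hi) (fun i hi => hymin i hi)
    rw [← hb2] at this
    exact this
  -- path bound
  have hreach : G.Reachable x y := hG.preconnected x y
  obtain ⟨w, hw⟩ := hreach.exists_walk_length_eq_dist
  set pth := w.bypass with hpth
  have hpathlen : (pth.length : ℝ) ≤ (D : ℝ) := by
    have h1 : pth.length ≤ w.length := SimpleGraph.Walk.length_bypass_le w
    have h2 : w.length = G.dist x y := hw
    have h3 : G.dist x y ≤ D := hDle x ((hmemBF x).mp hx) y ((hmemBF y).mp hy)
    exact_mod_cast le_trans h1 (h2 ▸ h3)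
  have hlistsum : (pth.edges.map (edgeEnergy u)).sum ≤ ∑ e ∈ EF, edgeEnergy u e := by
    apply list_sum_le_finset_sum (SimpleGraph.Walk.bypass_isPath w).edges_nodup
    · intro e he
      rw [Set.Finite.mem_toFinset]
      exact SimpleGraph.Walk.edges_subset_edgeSet pth he
    · intro e _
      exact edgeEnergy_nonneg u e
  have hMm : (M - m) ^ 2 ≤ (D : ℝ) * energy G.edgeSet u := by
    have h0 := walk_energy u pth
    have hlen_nn : (0 : ℝ) ≤ (pth.length : ℝ) := Nat.cast_nonneg _
    have hls_nn : (0:ℝ) ≤ (pth.edges.map (edgeEnergy u)).sum := by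
      apply List.sum_nonneg
      intro r hr
      obtain ⟨e, _, rfl⟩ := List.mem_map.mp hr
      exact edgeEnergy_nonneg u e
    calc (M - m) ^ 2 ≤ (pth.length : ℝ) * (pth.edges.map (edgeEnergy u)).sum := h0
      _ ≤ (pth.length : ℝ) * energy G.edgeSet u := by
          apply mul_le_mul_of_nonneg_left _ hlen_nn
          rw [hE]; exact hlistsum
      _ ≤ (D : ℝ) * energy G.edgeSet u := mul_le_mul_of_nonneg_right hpathlen hEnn
  -- positivity of denominator
  have hp1 : 1 ≤ p := by omega
  have hq1 : 1 ≤ q := by omega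
  have hdenpos : 0 < (p : ℝ) * (q : ℝ) * (D : ℝ) := by
    have : (1:ℝ) ≤ (p:ℝ) := by exact_mod_cast hp1
    have : (1:ℝ) ≤ (q:ℝ) := by exact_mod_cast hq1
    have : (1:ℝ) ≤ (D:ℝ) := by exact_mod_cast hD1
    positivity
  rw [div_le_div_iff₀ hdenpos hNpos]
  have hpqnn : (0:ℝ) ≤ (p:ℝ) * (q:ℝ) := by positivity
  calc (b : ℝ) * boundaryNorm B u = (b : ℝ) * ∑ i ∈ BF, u i ^ 2 := by rw [hN]
    _ ≤ (p : ℝ) * (q : ℝ) * (M - m) ^ 2 := hkey1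
    _ ≤ (p : ℝ) * (q : ℝ) * ((D : ℝ) * energy G.edgeSet u) :=
        mul_le_mul_of_nonneg_left hMm hpqnn
    _ = energy G.edgeSet u * ((p : ℝ) * (q : ℝ) * (D : ℝ)) := by ring

/-- Perrin's second lower bound via the extrinsic diameter of the boundary:
`σ₁(Γ,B) ≥ |B| / (⌊|B|/2⌋ · ⌈|B|/2⌉ · d_B)`. -/
theorem perrin_second_diameter_bound
    {V : Type*} [Fintype V] (G : SimpleGraph V) (hG : G.Connected)
    (B : Set V) (hB : 2 ≤ B.ncard) :
    (B.ncard : ℝ) /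
        (((B.ncard / 2 : ℕ) : ℝ) * (((B.ncard + 1) / 2 : ℕ) : ℝ) *
          ((sSup {n : ℕ | ∃ v ∈ B, ∃ w ∈ B, G.dist v w = n} : ℕ) : ℝ)) ≤
      steklov G.edgeSet Set.univ B 1 := by
  classical
  set target := (B.ncard : ℝ) /
        (((B.ncard / 2 : ℕ) : ℝ) * (((B.ncard + 1) / 2 : ℕ) : ℝ) *
          ((sSup {n : ℕ | ∃ v ∈ B, ∃ w ∈ B, G.dist v w = n} : ℕ) : ℝ)) with htarget
  rw [steklov]
  apply le_csInf
  -- Nonemptiness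
  · obtain ⟨a, c, ha, hc, hac⟩ := (Set.one_lt_ncard_iff (Set.toFinite B)).mp (by omega)
    set f : V → ℝ := Pi.single a 1 with hf
    set g : V → ℝ := Pi.single c 1 with hg
    set w : Fin 2 → (V → ℝ) := ![f, g] with hwdef
    have hfa : f a = 1 := Pi.single_eq_same a 1
    have hfc : f c = 0 := Pi.single_eq_of_ne (Ne.symm hac) 1
    have hga : g a = 0 := Pi.single_eq_of_ne hac 1
    have hgc : g c = 1 := Pi.single_eq_same c 1
    have hli : LinearIndependent ℝ w := by
      rw [hwdef, LinearIndependent.pair_iff]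
      intro s t hst
      have h1 := congrFun hst a
      have h2 := congrFun hst c
      simp [hfa, hfc, hga, hgc] at h1 h2
      exact ⟨h1, h2⟩
    set F := Submodule.span ℝ (Set.range w) with hF
    have hle : F ≤ funcsOn Set.univ := by
      intro u _
      intro v hv
      exact absurd (Set.mem_univ v) hv
    have hdim : Module.finrank ℝ ↥F = 2 := by
      rw [hF, finrank_span_eq_card hli, Fintype.card_fin]
    have hmapw : restrictTo B ∘ w = ![restrictTo B f, restrictTo B g] := by
      funext i
      fin_cases i <;> rfl
    have hlir : LinearIndependent ℝ ![restrictTo B f, restrictTo B g] := by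
      rw [LinearIndependent.pair_iff]
      intro s t hst
      have h1 := congrFun hst ⟨a, ha⟩
      have h2 := congrFun hst ⟨c, hc⟩
      simp [restrictTo, LinearMap.funLeft, hfa, hfc, hga, hgc] at h1 h2
      exact ⟨h1, h2⟩
    have hdimmap : Module.finrank ℝ ↥(F.map (restrictTo B)) = 2 := by
      rw [hF, Submodule.map_span, ← Set.range_comp, hmapw, finrank_span_eq_card hlir,
        Fintype.card_fin]
    exact ⟨_, F, hle, hdim, hdimmap, rfl⟩
  -- every element is at least the target
  · rintro t ⟨F, hle, hdim, hdimmap, rfl⟩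
    haveI : Fintype ↥B := Fintype.ofFinite _
    set ψ : ↥F →ₗ[ℝ] (↥B → ℝ) := (restrictTo B).domRestrict F with hψ
    have hrange : LinearMap.range ψ = F.map (restrictTo B) := by
      ext z
      simp [hψ, LinearMap.mem_range, Submodule.mem_map, Subtype.exists]
    have hrangedim : Module.finrank ℝ ↥(LinearMap.range ψ) = 2 := by
      rw [hrange]; exact hdimmap
    have hrn := LinearMap.finrank_range_add_finrank_ker ψ
    rw [hrangedim, hdim] at hrn
    have hkerdim : Module.finrank ℝ ↥(LinearMap.ker ψ) = 0 := by omega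
    have hker : LinearMap.ker ψ = ⊥ := Submodule.finrank_eq_zero.mp hkerdim
    have hinj : Function.Injective ψ := LinearMap.ker_eq_bot.mp hker
    -- zero-mean element
    set BF := (Set.toFinite B).toFinset with hBFdef
    set φ : ↥F →ₗ[ℝ] ℝ := (∑ i ∈ BF, LinearMap.proj (R := ℝ) (φ := fun _ : V => ℝ) i).domRestrict F with hφ
    have hφapp : ∀ v : ↥F, φ v = ∑ i ∈ BF, (v : V → ℝ) i := by
      intro v
      simp [hφ, LinearMap.domRestrict_apply, LinearMap.sum_apply, LinearMap.proj_apply]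
    have hkerφ : LinearMap.ker φ ≠ ⊥ := by
      intro hbot
      have h1 := LinearMap.finrank_range_add_finrank_ker φ
      rw [hdim, hbot, finrank_bot] at h1
      have h2 : Module.finrank ℝ ↥(LinearMap.range φ) ≤ Module.finrank ℝ ℝ :=
        Submodule.finrank_le _
      rw [Module.finrank_self] at h2
      omega
    obtain ⟨v, hvker, hvne⟩ := Submodule.exists_mem_ne_zero_of_ne_bot hkerφ
    set u : V → ℝ := (v : V → ℝ) with hu
    have huF : u ∈ F := v.2
    have hune : u ≠ 0 := fun h => hvne (Subtype.ext h)
    have hsum : ∑ i ∈ BF, u i = 0 := by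
      rw [← hφapp v]
      exact LinearMap.mem_ker.mp hvker
    have hrne : restrictTo B u ≠ 0 := by
      intro h0
      apply hune
      have h1 : ψ v = 0 := h0
      have h2 : v = 0 := hinj (a₂ := 0) (by rw [h1]; simp)
      simpa [hu] using congrArg (Subtype.val) h2
    have hne : ∃ i ∈ B, u i ≠ 0 := by
      have := Function.ne_iff.mp hrne
      obtain ⟨j, hj⟩ := this
      exact ⟨j.1, j.2, hj⟩
    -- the Rayleigh quotient of u belongs to the sSup set and exceeds target
    set R := { r : ℝ | ∃ u ∈ F, restrictTo B u ≠ 0 ∧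
      r = energy G.edgeSet u / boundaryNorm B u } with hR
    have hmem : energy G.edgeSet u / boundaryNorm B u ∈ R := ⟨u, huF, hrne, rfl⟩
    have hkey := key_estimate G hG B hB u hsum hne
    -- boundedness above of R
    have hbdd : BddAbove R := bddAbove_R G B F hinj
    calc target ≤ energy G.edgeSet u / boundaryNorm B u := hkey
      _ ≤ sSup R := le_csSup hbdd hmem
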